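/- Let λ be a real constant and let f : ℝⁿ → ℝ be a smooth function satisfying Σ_{i,j} g^{ij} f_{ij} = -f + Σ_i x_i f_i + λ√(1+|Df|²) on ℝⁿ. Set ψ = log det(g_{ij}). Then at every point of ℝⁿ, L_{(λ,f)}ψ ≥ (1/2) Σ_{i,j} g^{ij} ψ_i ψ_j, where L_{(λ,f)} is taken with coefficient matrix (a_{ij}) = (g_{ij}). -/

import Mathlib

/-- The `i`-th partial derivative of a function `f : ℝⁿ → ℝ`. -/
noncomputable def pd {n : ℕ} (f : (Fin n → ℝ) → ℝ) (i : Fin n) (x : Fin n → ℝ) : ℝ :=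
  fderiv ℝ f x (Pi.single i 1)

/-- The induced metric `g_{ij} = δ_{ij} + f_i f_j` of the graph of `f`. -/
noncomputable def gMat {n : ℕ} (f : (Fin n → ℝ) → ℝ) (x : Fin n → ℝ) :
    Matrix (Fin n) (Fin n) ℝ :=
  Matrix.of fun i j => (if i = j then (1 : ℝ) else 0) + pd f i x * pd f j x

/-- The inverse metric `(g^{ij})`. -/
noncomputable def gInv {n : ℕ} (f : (Fin n → ℝ) → ℝ) (x : Fin n → ℝ) :
    Matrix (Fin n) (Fin n) ℝ :=
  (gMat f x)⁻¹

/-- The operator `L_{(λ,f)}ψ = Σ a^{ij} ψ_{ij} − ⟨x, Dψ⟩ − λ⟨Df, Dψ⟩/√(1+|Df|²)`, where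
`(a^{ij})` is the inverse of the matrix field `a`. -/
noncomputable def Lop {n : ℕ} (lam : ℝ) (f : (Fin n → ℝ) → ℝ)
    (a : (Fin n → ℝ) → Matrix (Fin n) (Fin n) ℝ)
    (ψ : (Fin n → ℝ) → ℝ) (x : Fin n → ℝ) : ℝ :=
  (∑ i, ∑ j, (a x)⁻¹ i j * pd (pd ψ j) i x)
    - (∑ i, x i * pd ψ i x)
    - lam * (∑ i, pd f i x * pd ψ i x) / Real.sqrt (1 + ∑ i, (pd f i x) ^ 2)

section Infra
variable {n : ℕ}

lemma contDiff_pd {f : (Fin n → ℝ) → ℝ} (hf : ContDiff ℝ (⊤ : ℕ∞) f) (i : Fin n) :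
    ContDiff ℝ (⊤ : ℕ∞) (pd f i) := by
  have h1 : ContDiff ℝ (⊤ : ℕ∞) (fderiv ℝ f) := hf.fderiv_right (by simp)
  exact h1.clm_apply contDiff_const

lemma pd_eq_of_hasFDerivAt {F : (Fin n → ℝ) → ℝ} {L : (Fin n → ℝ) →L[ℝ] ℝ} {x : Fin n → ℝ}
    (h : HasFDerivAt F L x) (i : Fin n) : pd F i x = L (Pi.single i 1) := by
  rw [pd, h.fderiv]

lemma pd_congr {F G : (Fin n → ℝ) → ℝ} (h : F = G) (i : Fin n) (x : Fin n → ℝ) :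
    pd F i x = pd G i x := by rw [h]

lemma pd_mul {a b : (Fin n → ℝ) → ℝ} {x : Fin n → ℝ} (ha : DifferentiableAt ℝ a x)
    (hb : DifferentiableAt ℝ b x) (i : Fin n) :
    pd (fun y => a y * b y) i x = pd a i x * b x + a x * pd b i x := by
  rw [pd_eq_of_hasFDerivAt (ha.hasFDerivAt.fun_mul hb.hasFDerivAt) i]
  simp [pd]; ring

lemma pd_add {a b : (Fin n → ℝ) → ℝ} {x : Fin n → ℝ} (ha : DifferentiableAt ℝ a x)
    (hb : DifferentiableAt ℝ b x) (i : Fin n) :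
    pd (fun y => a y + b y) i x = pd a i x + pd b i x := by
  rw [pd_eq_of_hasFDerivAt (ha.hasFDerivAt.fun_add hb.hasFDerivAt) i]; simp [pd]

lemma pd_sub {a b : (Fin n → ℝ) → ℝ} {x : Fin n → ℝ} (ha : DifferentiableAt ℝ a x)
    (hb : DifferentiableAt ℝ b x) (i : Fin n) :
    pd (fun y => a y - b y) i x = pd a i x - pd b i x := by
  rw [pd_eq_of_hasFDerivAt (ha.hasFDerivAt.fun_sub hb.hasFDerivAt) i]; simp [pd]

lemma pd_const (c : ℝ) (i : Fin n) (x : Fin n → ℝ) : pd (fun _ => c) i x = 0 := by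
  rw [pd_eq_of_hasFDerivAt (hasFDerivAt_const c x) i]; simp

lemma pd_const_mul {a : (Fin n → ℝ) → ℝ} {x : Fin n → ℝ} (ha : DifferentiableAt ℝ a x)
    (c : ℝ) (i : Fin n) :
    pd (fun y => c * a y) i x = c * pd a i x := by
  rw [pd_mul (differentiableAt_const c) ha, pd_const]; ring

lemma pd_sum {ι : Type*} (s : Finset ι) (F : ι → (Fin n → ℝ) → ℝ) {x : Fin n → ℝ}
    (hF : ∀ k ∈ s, DifferentiableAt ℝ (F k) x) (i : Fin n) :
    pd (fun y => ∑ k ∈ s, F k y) i x = ∑ k ∈ s, pd (F k) i x := by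
  rw [pd_eq_of_hasFDerivAt (HasFDerivAt.fun_sum (fun k hk => (hF k hk).hasFDerivAt)) i]
  simp [pd]

lemma pd_coord (j : Fin n) (i : Fin n) (x : Fin n → ℝ) :
    pd (fun y => y j) i x = if i = j then 1 else 0 := by
  have : HasFDerivAt (fun y : Fin n → ℝ => y j)
      (ContinuousLinearMap.proj j : (Fin n → ℝ) →L[ℝ] ℝ) x :=
    (ContinuousLinearMap.proj j : (Fin n → ℝ) →L[ℝ] ℝ).hasFDerivAt
  rw [pd_eq_of_hasFDerivAt this i]
  simp [Pi.single_apply, eq_comm]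

lemma pd_log {a : (Fin n → ℝ) → ℝ} {x : Fin n → ℝ} (ha : DifferentiableAt ℝ a x)
    (h0 : a x ≠ 0) (i : Fin n) :
    pd (fun y => Real.log (a y)) i x = pd a i x / a x := by
  rw [pd_eq_of_hasFDerivAt (ha.hasFDerivAt.log h0) i]
  simp [pd]; ring

lemma pd_sqrt {a : (Fin n → ℝ) → ℝ} {x : Fin n → ℝ} (ha : DifferentiableAt ℝ a x)
    (h0 : a x ≠ 0) (i : Fin n) :
    pd (fun y => Real.sqrt (a y)) i x = pd a i x / (2 * Real.sqrt (a x)) := by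
  rw [pd_eq_of_hasFDerivAt (ha.hasFDerivAt.sqrt h0) i]
  simp [pd]; ring

lemma pd_div {a b : (Fin n → ℝ) → ℝ} {x : Fin n → ℝ} (ha : DifferentiableAt ℝ a x)
    (hb : DifferentiableAt ℝ b x) (h0 : b x ≠ 0) (i : Fin n) :
    pd (fun y => a y / b y) i x
      = (pd a i x * b x - a x * pd b i x) / (b x)^2 := by
  have hinv : HasFDerivAt (fun y => (b y)⁻¹)
      ((-ContinuousLinearMap.mulLeftRight ℝ ℝ (b x)⁻¹ (b x)⁻¹).comp (fderiv ℝ b x)) x :=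
    (hasFDerivAt_inv' h0).comp x hb.hasFDerivAt
  have : (fun y => a y / b y) = fun y => a y * (b y)⁻¹ := by
    funext y; rw [div_eq_mul_inv]
  rw [this, pd_eq_of_hasFDerivAt (ha.hasFDerivAt.fun_mul hinv.differentiableAt.hasFDerivAt) i]
  have h2 : fderiv ℝ (fun y => (b y)⁻¹) x = (-ContinuousLinearMap.mulLeftRight ℝ ℝ (b x)⁻¹ (b x)⁻¹).comp (fderiv ℝ b x) := hinv.fderiv
  simp [pd, h2]
  field_simp
  ring

lemma pd_pow2 {a : (Fin n → ℝ) → ℝ} {x : Fin n → ℝ} (ha : DifferentiableAt ℝ a x) (i : Fin n) :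
    pd (fun y => (a y)^2 : (Fin n → ℝ) → ℝ) i x = 2 * a x * pd a i x := by
  have : (fun y => (a y)^2) = fun y => a y * a y := by funext y; ring
  rw [this, pd_mul ha ha]; ring

lemma diffAt_div {a b : (Fin n → ℝ) → ℝ} {x : Fin n → ℝ} (ha : DifferentiableAt ℝ a x)
    (hb : DifferentiableAt ℝ b x) (h0 : b x ≠ 0) :
    DifferentiableAt ℝ (fun y => a y / b y) x := by
  have : (fun y => a y / b y) = fun y => a y * (b y)⁻¹ := funext fun y => div_eq_mul_inv _ _
  rw [this]
  exact ha.mul ((differentiableAt_inv h0).comp x hb)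

lemma pd_neg {a : (Fin n → ℝ) → ℝ} {x : Fin n → ℝ} (ha : DifferentiableAt ℝ a x) (i : Fin n) :
    pd (fun y => -a y) i x = -pd a i x := by
  rw [pd_eq_of_hasFDerivAt ha.hasFDerivAt.fun_neg i]; simp [pd]

end Infra

section Met
variable {n : ℕ}

lemma vpos (p : Fin n → ℝ) : 0 < 1 + ∑ i, (p i)^2 := by positivity

lemma gMat_eq (f : (Fin n → ℝ) → ℝ) (x : Fin n → ℝ) :
    gMat f x = 1 + Matrix.replicateCol Unit (fun i => pd f i x) * Matrix.replicateRow Unit (fun i => pd f i x) := by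
  ext i j
  simp [gMat, Matrix.mul_apply, Matrix.one_apply]

lemma det_gMat (f : (Fin n → ℝ) → ℝ) (x : Fin n → ℝ) :
    (gMat f x).det = 1 + ∑ i, (pd f i x)^2 := by
  rw [gMat_eq, Matrix.det_one_add_replicateCol_mul_replicateRow]
  simp [dotProduct, sq]

lemma gInv_apply (f : (Fin n → ℝ) → ℝ) (x : Fin n → ℝ) (i j : Fin n) :
    gInv f x i j = (if i = j then 1 else 0)
      - pd f i x * pd f j x / (1 + ∑ k, (pd f k x)^2) := by
  set p := fun k => pd f k x with hp
  have hV := vpos p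
  have hright : gMat f x * (Matrix.of fun i j =>
      (if i = j then (1:ℝ) else 0) - p i * p j / (1 + ∑ k, (p k)^2)) = 1 := by
    ext i j
    simp only [Matrix.mul_apply, gMat, Matrix.of_apply, Matrix.one_apply]
    have expand : ∀ k, ((if i = k then (1:ℝ) else 0) + p i * p k) *
        ((if k = j then (1:ℝ) else 0) - p k * p j / (1 + ∑ l, (p l)^2))
        = ((if i = k then (1:ℝ) else 0) * (if k = j then (1:ℝ) else 0))
          + (if k = j then (1:ℝ) else 0) * (p i * p k)
          - (if i = k then (1:ℝ) else 0) * (p k * p j / (1 + ∑ l, (p l)^2))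
          - (p i * p j / (1 + ∑ l, (p l)^2)) * (p k)^2 := by
      intro k; ring
    rw [Finset.sum_congr rfl (fun k _ => expand k)]
    simp only [Finset.sum_sub_distrib, Finset.sum_add_distrib, ← Finset.mul_sum,
      ite_mul, mul_ite, mul_one, mul_zero, zero_mul, one_mul,
      Finset.sum_ite_eq, Finset.sum_ite_eq', Finset.mem_univ, if_true]
    by_cases h : i = j <;> simp [h] <;> field_simp <;> ring
  rw [gInv, Matrix.inv_eq_right_inv hright]
  simp [hp]

lemma hsymm {f : (Fin n → ℝ) → ℝ} (hf : ContDiff ℝ (⊤ : ℕ∞) f) (i j : Fin n) (x : Fin n → ℝ) :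
    pd (pd f j) i x = pd (pd f i) j x := by
  have hd : ContDiff ℝ (⊤ : ℕ∞) (fderiv ℝ f) := hf.fderiv_right (by simp)
  have key : ∀ a b : Fin n, pd (pd f b) a x
      = fderiv ℝ (fderiv ℝ f) x (Pi.single a 1) (Pi.single b 1) := by
    intro a b
    have : pd f b = fun y => (fderiv ℝ f y) (Pi.single b 1) := rfl
    rw [pd, this, fderiv_clm_apply (hd.differentiable (by simp) x) (differentiableAt_const _)]
    simp
  rw [key, key]
  have hs := (hf.contDiffAt (x := x)).isSymmSndFDerivAt (by rw [minSmoothness_of_isRCLikeNormedField]; exact WithTop.coe_le_coe.2 (le_top : (2:ℕ∞) ≤ ⊤))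
  exact hs _ _

end Met

section SOS
variable {n : ℕ}

-- collapse lemmas
lemma col_pq {p q : Fin n → ℝ} {h : Fin n → Fin n → ℝ}
    (hsym : ∀ i j, h i j = h j i) (hq : ∀ i, q i = ∑ k, p k * h i k) (j : Fin n) :
    ∑ i, p i * h i j = q j := by
  rw [hq j]; exact Finset.sum_congr rfl fun i _ => by rw [hsym i j]

lemma dsum_factor (a b : Fin n → ℝ) :
    ∑ i, ∑ j, a i * b j = (∑ i, a i) * (∑ j, b j) := by
  rw [Finset.sum_mul_sum]

lemma sos_lemma (p q : Fin n → ℝ) (h : Fin n → Fin n → ℝ)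
    (hsym : ∀ i j, h i j = h j i) (hq : ∀ i, q i = ∑ k, p k * h i k) :
    0 ≤ (∑ i, ∑ j, (h i j)^2) * (1 + ∑ i, (p i)^2)^2
        - 2 * (∑ i, (q i)^2) * (1 + ∑ i, (p i)^2) + (∑ i, p i * q i)^2 := by
  set S0 := ∑ i, (p i)^2 with hS0
  set A := ∑ i, ∑ j, (h i j)^2 with hA
  set B := ∑ i, (q i)^2 with hB
  set C := ∑ i, p i * q i with hC
  have hS0nn : 0 ≤ S0 := Finset.sum_nonneg fun i _ => sq_nonneg _
  have hAnn : 0 ≤ A := Finset.sum_nonneg fun i _ => Finset.sum_nonneg fun j _ => sq_nonneg _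
  rcases eq_or_lt_of_le hS0nn with hS00 | hS0pos
  · -- S0 = 0 case
    have hp0 : ∀ i, p i = 0 := by
      intro i
      have := (Finset.sum_eq_zero_iff_of_nonneg (fun i _ => sq_nonneg (p i))).1 hS00.symm i
        (Finset.mem_univ i)
      exact (pow_eq_zero_iff two_ne_zero).1 this
    have hq0 : ∀ i, q i = 0 := fun i => by
      rw [hq i]; exact Finset.sum_eq_zero fun k _ => by rw [hp0 k]; ring
    have hB0 : B = 0 := by
      rw [hB]; exact Finset.sum_eq_zero fun i _ => by rw [hq0 i]; ring
    have hC0 : C = 0 := by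
      rw [hC]; exact Finset.sum_eq_zero fun i _ => by rw [hq0 i]; ring
    rw [hB0, hC0]
    nlinarith [hAnn, hS0nn]
  · -- S0 > 0 case
    set v := Real.sqrt (1 + S0) with hv
    have hv2pos : (0:ℝ) < 1 + S0 := by linarith
    have hvpos : 0 < v := Real.sqrt_pos.2 hv2pos
    have hvsq : v^2 = 1 + S0 := Real.sq_sqrt hv2pos.le
    set c := (1 - 1/v)/S0 with hc
    have hk : 2*c - c^2*S0 = 1/(1+S0) := by
      rw [hc]
      field_simp
      nlinarith [hvsq, hvpos]
    set N := fun i j => h i j - c*(p i * q j + q i * p j) + c^2*C*(p i * p j) with hN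
    have expand : ∀ i j, (N i j)^2
        = (h i j)^2 - 2*c*(h i j*(p i * q j)) - 2*c*(h i j*(q i * p j))
          + 2*c^2*C*(h i j*(p i * p j)) + c^2*((p i)^2 * (q j)^2)
          + 2*c^2*((p i * q i)*(p j * q j)) + c^2*((q i)^2 * (p j)^2)
          - 2*c^3*C*((p i)^2*(p j * q j)) - 2*c^3*C*((p i * q i)*(p j)^2)
          + c^4*C^2*((p i)^2 * (p j)^2) := by
      intro i j; rw [hN]; ring
    have d1 : ∑ i, ∑ j, h i j * (p i * q j) = B := by
      rw [Finset.sum_comm]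
      rw [hB]
      refine Finset.sum_congr rfl fun j _ => ?_
      have : ∑ i, h i j * (p i * q j) = (∑ i, p i * h i j) * q j := by
        rw [Finset.sum_mul]
        exact Finset.sum_congr rfl fun i _ => by ring
      rw [this, col_pq hsym hq, sq]
    have d2 : ∑ i, ∑ j, h i j * (q i * p j) = B := by
      rw [hB]
      refine Finset.sum_congr rfl fun i _ => ?_
      have : ∑ j, h i j * (q i * p j) = (∑ j, p j * h i j) * q i := by
        rw [Finset.sum_mul]
        exact Finset.sum_congr rfl fun j _ => by ring
      rw [this]
      have : ∑ j, p j * h i j = q i := by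
        rw [hq i]
      rw [this, sq]
    have d3 : ∑ i, ∑ j, h i j * (p i * p j) = C := by
      rw [hC]
      refine Finset.sum_congr rfl fun i _ => ?_
      have : ∑ j, h i j * (p i * p j) = p i * ∑ j, p j * h i j := by
        rw [Finset.mul_sum]
        exact Finset.sum_congr rfl fun j _ => by ring
      rw [this]
      have : ∑ j, p j * h i j = q i := by
        rw [hq i]
      rw [this]
    have main : ∑ i, ∑ j, (N i j)^2 = A - 2*(2*c - c^2*S0)*B + (2*c - c^2*S0)^2*C^2 := by
      have h1 : ∑ i, ∑ j, (N i j)^2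
          = ∑ i, ∑ j, ((h i j)^2 - 2*c*(h i j*(p i * q j)) - 2*c*(h i j*(q i * p j))
          + 2*c^2*C*(h i j*(p i * p j)) + c^2*((p i)^2 * (q j)^2)
          + 2*c^2*((p i * q i)*(p j * q j)) + c^2*((q i)^2 * (p j)^2)
          - 2*c^3*C*((p i)^2*(p j * q j)) - 2*c^3*C*((p i * q i)*(p j)^2)
          + c^4*C^2*((p i)^2 * (p j)^2)) :=
        Finset.sum_congr rfl fun i _ => Finset.sum_congr rfl fun j _ => expand i j
      rw [h1]
      simp only [Finset.sum_add_distrib, Finset.sum_sub_distrib, ← Finset.mul_sum,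
        ← Finset.sum_mul]
      rw [d1, d2, d3, ← hS0, ← hB, ← hC, ← hA]
      ring
    have hNnn : 0 ≤ ∑ i, ∑ j, (N i j)^2 :=
      Finset.sum_nonneg fun i _ => Finset.sum_nonneg fun j _ => sq_nonneg _
    rw [main, hk] at hNnn
    have h1 : (0:ℝ) < (1+S0)^2 := by positivity
    have key : A * (1+S0)^2 - 2*B*(1+S0) + C^2 = (1+S0)^2 * (A - 2*(1/(1+S0))*B + (1/(1+S0))^2*C^2) := by
      field_simp
    rw [key]
    exact mul_nonneg h1.le hNnn

lemma diag_sum (F : Fin n → Fin n → ℝ) :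
    ∑ i, ∑ j, (if i = j then (1:ℝ) else 0) * F i j = ∑ i, F i i := by
  refine Finset.sum_congr rfl fun i _ => ?_
  rw [show ∑ j, (if i = j then (1:ℝ) else 0) * F i j = ∑ j, (if i = j then F i j else 0) from
    Finset.sum_congr rfl fun j _ => by by_cases h : i = j <;> simp [h]]
  simp

lemma dsum_collapse (u w : Fin n → Fin n → ℝ) :
    ∑ i, ∑ j, (∑ k, u i k * w j k) = ∑ k, (∑ i, u i k) * (∑ j, w j k) := by
  calc ∑ i, ∑ j, ∑ k, u i k * w j k
      = ∑ i, ∑ k, ∑ j, u i k * w j k :=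
        Finset.sum_congr rfl fun i _ => Finset.sum_comm
    _ = ∑ i, ∑ k, u i k * ∑ j, w j k := by
        refine Finset.sum_congr rfl fun i _ => Finset.sum_congr rfl fun k _ => ?_
        rw [Finset.mul_sum]
    _ = ∑ k, ∑ i, u i k * ∑ j, w j k := Finset.sum_comm
    _ = ∑ k, (∑ i, u i k) * ∑ j, w j k := by
        refine Finset.sum_congr rfl fun k _ => ?_
        rw [Finset.sum_mul]


lemma triple_comm (F : Fin n → Fin n → Fin n → ℝ) :
    ∑ i, ∑ j, ∑ k, F i j k = ∑ k, ∑ i, ∑ j, F i j k := by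
  calc ∑ i, ∑ j, ∑ k, F i j k
      = ∑ i, ∑ k, ∑ j, F i j k := Finset.sum_congr rfl fun i _ => Finset.sum_comm
    _ = ∑ k, ∑ i, ∑ j, F i j k := Finset.sum_comm

lemma gsum (v2 : ℝ) (p : Fin n → ℝ) (F : Fin n → Fin n → ℝ) :
    ∑ i, ∑ j, ((if i = j then (1:ℝ) else 0) - p i * p j / v2) * F i j
      = (∑ i, F i i) - (1/v2) * ∑ i, ∑ j, (p i * p j) * F i j := by
  have e : ∀ i j : Fin n, ((if i = j then (1:ℝ) else 0) - p i * p j / v2) * F i j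
      = (if i = j then (1:ℝ) else 0) * F i j - (1/v2) * ((p i * p j) * F i j) := by
    intro i j; ring
  calc ∑ i, ∑ j, ((if i = j then (1:ℝ) else 0) - p i * p j / v2) * F i j
      = ∑ i, ∑ j, ((if i = j then (1:ℝ) else 0) * F i j - (1/v2) * ((p i * p j) * F i j)) :=
        Finset.sum_congr rfl fun i _ => Finset.sum_congr rfl fun j _ => e i j
    _ = (∑ i, F i i) - (1/v2) * ∑ i, ∑ j, (p i * p j) * F i j := by
        simp only [Finset.sum_sub_distrib, ← Finset.mul_sum]
        rw [diag_sum]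

lemma main_algebra (lam : ℝ) (xv p q : Fin n → ℝ) (h : Fin n → Fin n → ℝ)
    (t : Fin n → Fin n → Fin n → ℝ) (v2 : ℝ)
    (hsym : ∀ i j, h i j = h j i)
    (tsym : ∀ i j k, t i j k = t k i j)
    (hq : ∀ i, q i = ∑ k, p k * h i k)
    (hv2 : v2 = 1 + ∑ i, (p i)^2)
    (Em : ∀ m, ∑ i, ∑ j,
        ( ((if i = j then (1:ℝ) else 0) - p i * p j / v2) * t m i j
          - ((h m i * p j + p i * h m j) * v2 - p i * p j * (2 * q m)) / v2^2 * h i j )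
        = ∑ i, xv i * h m i + lam * (2 * q m) / (2 * Real.sqrt v2)) :
    (1/2) * (∑ i, ∑ j, ((if i = j then (1:ℝ) else 0) - p i * p j / v2) * (2*q i/v2) * (2*q j/v2))
      ≤ (∑ i, ∑ j, ((if i = j then (1:ℝ) else 0) - p i * p j / v2)
            * ((2 * (∑ k, (h i k * h j k + p k * t i j k)) * v2 - 2*q j*(2*q i))/v2^2))
        - (∑ i, xv i * (2*q i/v2)) - lam * (∑ i, p i * (2*q i/v2)) / Real.sqrt v2 := by
  have hS0nn : (0:ℝ) ≤ ∑ i, (p i)^2 := Finset.sum_nonneg fun i _ => sq_nonneg _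
  have hv2pos : 0 < v2 := by rw [hv2]; linarith
  set v := Real.sqrt v2 with hvdef
  have hvpos : 0 < v := Real.sqrt_pos.2 hv2pos
  have hvsq : v^2 = v2 := Real.sq_sqrt hv2pos.le
  set S0 := ∑ i, (p i)^2 with hS0
  set A := ∑ i, ∑ j, (h i j)^2 with hA
  set B := ∑ i, (q i)^2 with hB
  set C := ∑ i, p i * q i with hC
  set X := ∑ i, xv i * q i with hX
  -- basic column collapses
  have colA : ∀ k, ∑ i, p i * h i k = q k := by
    intro k
    rw [hq k]
    exact Finset.sum_congr rfl fun i _ => by rw [hsym i k]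
  have colB : ∀ k, ∑ i, p i * h k i = q k := fun k => (hq k).symm
  -- W collapse
  have u1 : ∀ k, ∑ i, ∑ j, h k i * (p j * h i j) = ∑ i, h k i * q i := by
    intro k
    refine Finset.sum_congr rfl fun i _ => ?_
    rw [← Finset.mul_sum, colB i]
  have u2 : ∀ k, ∑ i, ∑ j, h k j * (p i * h i j) = ∑ i, h k i * q i := by
    intro k
    rw [Finset.sum_comm]
    refine Finset.sum_congr rfl fun j _ => ?_
    rw [← Finset.mul_sum, colA j]
  have u3 : ∑ i, ∑ j, p i * (p j * h i j) = C := by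
    rw [hC]
    refine Finset.sum_congr rfl fun i _ => ?_
    rw [← Finset.mul_sum, colB i]
  have Wsum : ∀ k, ∑ i, ∑ j,
      ((h k i * p j + p i * h k j) * v2 - p i * p j * (2 * q k)) / v2^2 * h i j
      = (2*v2*(∑ i, h k i * q i) - 2*q k*C)/v2^2 := by
    intro k
    have e : ∀ i j : Fin n,
        ((h k i * p j + p i * h k j) * v2 - p i * p j * (2 * q k)) / v2^2 * h i j
        = (v2/v2^2) * (h k i * (p j * h i j)) + (v2/v2^2) * (h k j * (p i * h i j))
          - (2*q k/v2^2) * (p i * (p j * h i j)) := by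
      intro i j; ring
    calc ∑ i, ∑ j, ((h k i * p j + p i * h k j) * v2 - p i * p j * (2 * q k)) / v2^2 * h i j
        = ∑ i, ∑ j, ((v2/v2^2) * (h k i * (p j * h i j)) + (v2/v2^2) * (h k j * (p i * h i j))
            - (2*q k/v2^2) * (p i * (p j * h i j))) :=
          Finset.sum_congr rfl fun i _ => Finset.sum_congr rfl fun j _ => e i j
      _ = (v2/v2^2) * (∑ i, ∑ j, h k i * (p j * h i j))
            + (v2/v2^2) * (∑ i, ∑ j, h k j * (p i * h i j))
            - (2*q k/v2^2) * (∑ i, ∑ j, p i * (p j * h i j)) := by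
          simp only [Finset.sum_add_distrib, Finset.sum_sub_distrib, ← Finset.mul_sum]
      _ = (2*v2*(∑ i, h k i * q i) - 2*q k*C)/v2^2 := by
          rw [u1 k, u2 k, u3]; ring
  -- the contracted differentiated PDE
  have KEY : ∑ i, ∑ j, ((if i = j then (1:ℝ) else 0) - p i * p j / v2) * (∑ k, p k * t i j k)
      = X + lam*C/v + 2*B/v2 - 2*C*C/v2^2 := by
    have step1 : ∀ i j : Fin n,
        ((if i = j then (1:ℝ) else 0) - p i * p j / v2) * (∑ k, p k * t i j k)
        = ∑ k, p k * (((if i = j then (1:ℝ) else 0) - p i * p j / v2) * t k i j) := by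
      intro i j
      rw [Finset.mul_sum]
      exact Finset.sum_congr rfl fun k _ => by rw [← tsym i j k]; ring
    have Ek : ∀ k, ∑ i, ∑ j, ((if i = j then (1:ℝ) else 0) - p i * p j / v2) * t k i j
        = (∑ i, xv i * h k i) + lam * (2 * q k) / (2 * v)
          + (2*v2*(∑ i, h k i * q i) - 2*q k*C)/v2^2 := by
      intro k
      have := Em k
      simp only [Finset.sum_sub_distrib] at this
      rw [Wsum k] at this
      linarith [this]
    calc ∑ i, ∑ j, ((if i = j then (1:ℝ) else 0) - p i * p j / v2) * (∑ k, p k * t i j k)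
        = ∑ i, ∑ j, ∑ k, p k * (((if i = j then (1:ℝ) else 0) - p i * p j / v2) * t k i j) :=
          Finset.sum_congr rfl fun i _ => Finset.sum_congr rfl fun j _ => step1 i j
      _ = ∑ k, ∑ i, ∑ j, p k * (((if i = j then (1:ℝ) else 0) - p i * p j / v2) * t k i j) :=
          triple_comm _
      _ = ∑ k, p k * ((∑ i, xv i * h k i) + lam * (2 * q k) / (2 * v)
            + (2*v2*(∑ i, h k i * q i) - 2*q k*C)/v2^2) := by
          refine Finset.sum_congr rfl fun k _ => ?_
          simp only [← Finset.mul_sum]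
          rw [Ek k]
      _ = ∑ k, ((∑ i, xv i * (p k * h k i)) + (lam/v) * (p k * q k)
            + (2*v2/v2^2) * (∑ i, q i * (p k * h k i)) - (2*C/v2^2)*(p k * q k)) := by
          refine Finset.sum_congr rfl fun k _ => ?_
          have e1 : p k * (∑ i, xv i * h k i) = ∑ i, xv i * (p k * h k i) := by
            rw [Finset.mul_sum]
            exact Finset.sum_congr rfl fun i _ => by ring
          have e2 : p k * (lam * (2 * q k) / (2 * v)) = (lam/v) * (p k * q k) := by
            field_simp
          have e3 : p k * ((2*v2*(∑ i, h k i * q i) - 2*q k*C)/v2^2)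
              = (2*v2/v2^2) * (∑ i, q i * (p k * h k i)) - (2*C/v2^2)*(p k * q k) := by
            have e4 : p k * (∑ i, h k i * q i) = ∑ i, q i * (p k * h k i) := by
              rw [Finset.mul_sum]
              exact Finset.sum_congr rfl fun i _ => by ring
            calc p k * ((2*v2*(∑ i, h k i * q i) - 2*q k*C)/v2^2)
                = (2*v2/v2^2) * (p k * (∑ i, h k i * q i)) - (2*C/v2^2)*(p k * q k) := by ring
              _ = (2*v2/v2^2) * (∑ i, q i * (p k * h k i)) - (2*C/v2^2)*(p k * q k) := by
                  rw [e4]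
          rw [mul_add, mul_add, e1, e2, e3]
          ring
      _ = X + lam*C/v + 2*B/v2 - 2*C*C/v2^2 := by
          have s1 : ∑ k, ∑ i, xv i * (p k * h k i) = X := by
            rw [Finset.sum_comm, hX]
            refine Finset.sum_congr rfl fun i _ => ?_
            rw [← Finset.mul_sum, colA i]
          have s2 : ∑ k, ∑ i, q i * (p k * h k i) = B := by
            rw [Finset.sum_comm, hB]
            refine Finset.sum_congr rfl fun i _ => ?_
            rw [← Finset.mul_sum, colA i, sq]
          simp only [Finset.sum_add_distrib, Finset.sum_sub_distrib, ← Finset.mul_sum]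
          rw [s1, s2, ← hC]
          field_simp
  -- g1 : the G-contraction of H*H
  have g1 : ∑ i, ∑ j, ((if i = j then (1:ℝ) else 0) - p i * p j / v2) * (∑ k, h i k * h j k)
      = A - (1/v2)*B := by
    rw [gsum]
    have d : ∑ i, ∑ j, (p i * p j) * (∑ k, h i k * h j k) = B := by
      have e : ∀ i j : Fin n, (p i * p j) * (∑ k, h i k * h j k)
          = ∑ k, (p i * h i k) * (p j * h j k) := by
        intro i j
        rw [Finset.mul_sum]
        exact Finset.sum_congr rfl fun k _ => by ring
      calc ∑ i, ∑ j, (p i * p j) * (∑ k, h i k * h j k)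
          = ∑ i, ∑ j, ∑ k, (p i * h i k) * (p j * h j k) :=
            Finset.sum_congr rfl fun i _ => Finset.sum_congr rfl fun j _ => e i j
        _ = ∑ k, (∑ i, p i * h i k) * (∑ j, p j * h j k) := dsum_collapse _ _
        _ = B := by
            rw [hB]
            refine Finset.sum_congr rfl fun k _ => ?_
            rw [colA k, sq]
    have ddiag : ∑ i, (∑ k, h i k * h i k) = A := by
      rw [hA]
      exact Finset.sum_congr rfl fun i _ => Finset.sum_congr rfl fun k _ => (sq (h i k)).symm
    rw [d, ddiag]
  -- g2 : the G-contraction of q q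
  have g2 : ∑ i, ∑ j, ((if i = j then (1:ℝ) else 0) - p i * p j / v2) * (q i * q j)
      = B - (1/v2)*(C*C) := by
    rw [gsum]
    have d : ∑ i, ∑ j, (p i * p j) * (q i * q j) = C * C := by
      have e : ∀ i j : Fin n, (p i * p j) * (q i * q j) = (p i * q i) * (p j * q j) := by
        intro i j; ring
      calc ∑ i, ∑ j, (p i * p j) * (q i * q j)
          = ∑ i, ∑ j, (p i * q i) * (p j * q j) :=
            Finset.sum_congr rfl fun i _ => Finset.sum_congr rfl fun j _ => e i j
        _ = (∑ i, p i * q i) * (∑ j, p j * q j) := dsum_factor _ _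
        _ = C * C := by rw [← hC]
    have ddiag : ∑ i, q i * q i = B := by
      rw [hB]
      exact Finset.sum_congr rfl fun i _ => (sq (q i)).symm
    rw [d, ddiag]
  -- the four pieces of the goal
  have hpiece1 : ∑ i, ∑ j, ((if i = j then (1:ℝ) else 0) - p i * p j / v2)
        * (2*q i/v2) * (2*q j/v2)
      = (4/v2^2)*(B - (1/v2)*(C*C)) := by
    have e : ∀ i j : Fin n, ((if i = j then (1:ℝ) else 0) - p i * p j / v2)
        * (2*q i/v2) * (2*q j/v2)
        = (4/v2^2) * (((if i = j then (1:ℝ) else 0) - p i * p j / v2) * (q i * q j)) := by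
      intro i j; ring
    calc ∑ i, ∑ j, ((if i = j then (1:ℝ) else 0) - p i * p j / v2) * (2*q i/v2) * (2*q j/v2)
        = ∑ i, ∑ j, (4/v2^2) * (((if i = j then (1:ℝ) else 0) - p i * p j / v2) * (q i * q j)) :=
          Finset.sum_congr rfl fun i _ => Finset.sum_congr rfl fun j _ => e i j
      _ = (4/v2^2) * ∑ i, ∑ j, ((if i = j then (1:ℝ) else 0) - p i * p j / v2) * (q i * q j) := by
          simp only [← Finset.mul_sum]
      _ = (4/v2^2)*(B - (1/v2)*(C*C)) := by rw [g2]
  have hpiece2 : ∑ i, ∑ j, ((if i = j then (1:ℝ) else 0) - p i * p j / v2)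
        * ((2 * (∑ k, (h i k * h j k + p k * t i j k)) * v2 - 2*q j*(2*q i))/v2^2)
      = (2*v2/v2^2)*(A - (1/v2)*B)
        + (2*v2/v2^2)*(X + lam*C/v + 2*B/v2 - 2*C*C/v2^2)
        - (4/v2^2)*(B - (1/v2)*(C*C)) := by
    have e : ∀ i j : Fin n, ((if i = j then (1:ℝ) else 0) - p i * p j / v2)
        * ((2 * (∑ k, (h i k * h j k + p k * t i j k)) * v2 - 2*q j*(2*q i))/v2^2)
        = (2*v2/v2^2) * (((if i = j then (1:ℝ) else 0) - p i * p j / v2) * (∑ k, h i k * h j k))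
          + (2*v2/v2^2) * (((if i = j then (1:ℝ) else 0) - p i * p j / v2) * (∑ k, p k * t i j k))
          - (4/v2^2) * (((if i = j then (1:ℝ) else 0) - p i * p j / v2) * (q i * q j)) := by
      intro i j
      rw [Finset.sum_add_distrib]
      ring
    calc ∑ i, ∑ j, ((if i = j then (1:ℝ) else 0) - p i * p j / v2)
          * ((2 * (∑ k, (h i k * h j k + p k * t i j k)) * v2 - 2*q j*(2*q i))/v2^2)
        = ∑ i, ∑ j, ((2*v2/v2^2) * (((if i = j then (1:ℝ) else 0) - p i * p j / v2) * (∑ k, h i k * h j k))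
          + (2*v2/v2^2) * (((if i = j then (1:ℝ) else 0) - p i * p j / v2) * (∑ k, p k * t i j k))
          - (4/v2^2) * (((if i = j then (1:ℝ) else 0) - p i * p j / v2) * (q i * q j))) :=
          Finset.sum_congr rfl fun i _ => Finset.sum_congr rfl fun j _ => e i j
      _ = (2*v2/v2^2) * (∑ i, ∑ j, ((if i = j then (1:ℝ) else 0) - p i * p j / v2) * (∑ k, h i k * h j k))
          + (2*v2/v2^2) * (∑ i, ∑ j, ((if i = j then (1:ℝ) else 0) - p i * p j / v2) * (∑ k, p k * t i j k))
          - (4/v2^2) * (∑ i, ∑ j, ((if i = j then (1:ℝ) else 0) - p i * p j / v2) * (q i * q j)) := by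
          simp only [Finset.sum_add_distrib, Finset.sum_sub_distrib, ← Finset.mul_sum]
      _ = (2*v2/v2^2)*(A - (1/v2)*B)
            + (2*v2/v2^2)*(X + lam*C/v + 2*B/v2 - 2*C*C/v2^2)
            - (4/v2^2)*(B - (1/v2)*(C*C)) := by rw [g1, KEY, g2]
  have hpiece3 : ∑ i, xv i * (2*q i/v2) = (2/v2)*X := by
    rw [hX, Finset.mul_sum]
    exact Finset.sum_congr rfl fun i _ => by ring
  have hpiece4 : ∑ i, p i * (2*q i/v2) = (2/v2)*C := by
    rw [hC, Finset.mul_sum]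
    exact Finset.sum_congr rfl fun i _ => by ring
  rw [hpiece1, hpiece2, hpiece3, hpiece4]
  -- now a scalar inequality
  have hsos : 0 ≤ A * v2^2 - 2*B*v2 + C^2 := by
    have := sos_lemma p q h hsym hq
    rw [← hA, ← hB, ← hC, ← hS0, ← hv2] at this
    linarith
  have hv2ne : v2 ≠ 0 := hv2pos.ne'
  have hvne : v ≠ 0 := hvpos.ne'
  have diff_eq : ((2*v2/v2^2)*(A - (1/v2)*B)
        + (2*v2/v2^2)*(X + lam*C/v + 2*B/v2 - 2*C*C/v2^2)
        - (4/v2^2)*(B - (1/v2)*(C*C)))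
      - ((2/v2)*X) - lam * ((2/v2)*C) / v
      - (1/2) * ((4/v2^2)*(B - (1/v2)*(C*C)))
      = 2*(A * v2^2 - 2*B*v2 + C^2)/v2^3 := by
    field_simp
    ring
  have hnn : 0 ≤ 2*(A * v2^2 - 2*B*v2 + C^2)/v2^3 := by
    apply div_nonneg (by linarith) (by positivity)
  linarith [diff_eq, hnn]

end SOS

/-- For an entire smooth solution of the graphic `λ`-hypersurface equation and
`ψ = log det(g_{ij})`, with coefficient matrix `(a_{ij}) = (g_{ij})` one has
`L_{(λ,f)}ψ ≥ (1/2) Σ g^{ij} ψ_i ψ_j` everywhere. -/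
theorem lambda_hypersurface_L_of_log_det_inequality
    {n : ℕ} (lam : ℝ) (f : (Fin n → ℝ) → ℝ) (hf : ContDiff ℝ (⊤ : ℕ∞) f)
    (heq : ∀ x : Fin n → ℝ,
      ∑ i, ∑ j, gInv f x i j * pd (pd f j) i x
        = -f x + ∑ i, x i * pd f i x
          + lam * Real.sqrt (1 + ∑ i, (pd f i x) ^ 2))
    (ψ : (Fin n → ℝ) → ℝ) (hψ : ψ = fun x => Real.log (gMat f x).det) :
    ∀ x : Fin n → ℝ,
      (1 / 2) * (∑ i, ∑ j, gInv f x i j * pd ψ i x * pd ψ j x)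
        ≤ Lop lam f (gMat f) ψ x := by
  have cP : ∀ k, ContDiff ℝ (⊤ : ℕ∞) (pd f k) := fun k => contDiff_pd hf k
  have dP : ∀ k, Differentiable ℝ (pd f k) := fun k => (cP k).differentiable (by simp)
  have cH : ∀ j k, ContDiff ℝ (⊤ : ℕ∞) (pd (pd f k) j) := fun j k => contDiff_pd (cP k) j
  have dH : ∀ j k, Differentiable ℝ (pd (pd f k) j) := fun j k => (cH j k).differentiable (by simp)
  have cV : ContDiff ℝ (⊤ : ℕ∞) (fun y => 1 + ∑ k, (pd f k y)^2) :=
    contDiff_const.add (ContDiff.sum fun k _ => (cP k).pow 2)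
  have dV : Differentiable ℝ (fun y => 1 + ∑ k, (pd f k y)^2) := cV.differentiable (by simp)
  have hVpos : ∀ y, 0 < 1 + ∑ k, (pd f k y)^2 := fun y => by positivity
  have hVne : ∀ y, (1 + ∑ k, (pd f k y)^2) ≠ 0 := fun y => (hVpos y).ne'
  have dQ : ∀ i, Differentiable ℝ (fun y => ∑ k, pd f k y * pd (pd f k) i y) :=
    fun i => (ContDiff.sum fun k (_ : k ∈ Finset.univ) => (cP k).mul (cH i k)).differentiable (by simp)
  have pdV : ∀ (i : Fin n) (y : Fin n → ℝ), pd (fun z => 1 + ∑ k, (pd f k z)^2) i y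
      = 2 * (∑ k, pd f k y * pd (pd f k) i y) := by
    intro i y
    rw [pd_add (a := fun _ => (1:ℝ)) (b := fun z => ∑ k, (pd f k z)^2)
      (differentiableAt_const 1)
      (((ContDiff.sum fun k (_ : k ∈ Finset.univ) => (cP k).pow 2).differentiable (by simp)) y) i,
      pd_const,
      pd_sum Finset.univ (fun k => fun z => (pd f k z)^2)
        (fun k _ => (((cP k).pow 2).differentiable (by simp)) y) i,
      Finset.mul_sum, zero_add]
    exact Finset.sum_congr rfl fun k _ => by rw [pd_pow2 ((dP k) y) i]; ring
  have hψeq : ψ = fun y => Real.log (1 + ∑ k, (pd f k y)^2) := by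
    rw [hψ]; funext y; rw [det_gMat]
  have hψd : ∀ (i : Fin n) (y : Fin n → ℝ), pd ψ i y
      = 2 * (∑ k, pd f k y * pd (pd f k) i y) / (1 + ∑ k, (pd f k y)^2) := by
    intro i y
    rw [pd_congr hψeq i y,
      pd_log (a := fun z => 1 + ∑ k, (pd f k z)^2) (dV y) (hVne y) i,
      pdV i y]
  have hψfun : ∀ i, pd ψ i = fun y =>
      2 * (∑ k, pd f k y * pd (pd f k) i y) / (1 + ∑ k, (pd f k y)^2) :=
    fun i => funext fun y => hψd i y
  intro x
  have hψdd : ∀ i j : Fin n, pd (pd ψ j) i x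
      = (2 * (∑ k, (pd (pd f k) i x * pd (pd f k) j x + pd f k x * pd (pd (pd f k) j) i x))
          * (1 + ∑ k, (pd f k x)^2)
        - 2 * (∑ k, pd f k x * pd (pd f k) j x) * (2 * (∑ k, pd f k x * pd (pd f k) i x)))
        / (1 + ∑ k, (pd f k x)^2)^2 := by
    intro i j
    have e1 : pd (fun y => 2 * (∑ k, pd f k y * pd (pd f k) j y)) i x
        = 2 * (∑ k, (pd (pd f k) i x * pd (pd f k) j x + pd f k x * pd (pd (pd f k) j) i x)) := by
      rw [pd_const_mul (a := fun y => ∑ k, pd f k y * pd (pd f k) j y) ((dQ j) x) 2 i]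
      congr 1
      rw [pd_sum Finset.univ (fun k => fun y => pd f k y * pd (pd f k) j y)
        (fun k _ => ((dP k) x).mul ((dH j k) x)) i]
      exact Finset.sum_congr rfl fun k _ => pd_mul ((dP k) x) ((dH j k) x) i
    rw [pd_congr (hψfun j) i x,
      pd_div (a := fun y => 2 * (∑ k, pd f k y * pd (pd f k) j y))
        (b := fun y => 1 + ∑ k, (pd f k y)^2)
        (((dQ j) x).const_mul 2) (dV x) (hVne x) i,
      e1, pdV i x]
  have hsym' : ∀ i j : Fin n, pd (pd f j) i x = pd (pd f i) j x := fun i j => hsymm hf i j x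
  have sw12 : ∀ i j k : Fin n,
      pd (pd (pd f k) j) i x = pd (pd (pd f k) i) j x :=
    fun i j k => hsymm (contDiff_pd hf k) i j x
  have sw23 : ∀ i j k : Fin n,
      pd (pd (pd f k) j) i x = pd (pd (pd f j) k) i x := by
    intro i j k
    exact pd_congr (funext fun y => hsymm hf j k y) i x
  have tsym' : ∀ i j k : Fin n,
      pd (pd (pd f k) j) i x = pd (pd (pd f j) i) k x := by
    intro i j k
    rw [sw12 i j k, sw23 j i k, sw12 j k i, sw23 k j i]
  -- the vanishing function coming from the equation
  have hΦ : (fun y => (∑ i, ∑ j, ((if i = j then (1:ℝ) else 0)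
        - pd f i y * pd f j y / (1 + ∑ k, (pd f k y)^2)) * pd (pd f j) i y)
      - (-f y + (∑ i, y i * pd f i y) + lam * Real.sqrt (1 + ∑ k, (pd f k y)^2)))
      = fun _ => (0:ℝ) := by
    funext y
    have h2 : ∑ i, ∑ j, gInv f y i j * pd (pd f j) i y
        = ∑ i, ∑ j, ((if i = j then (1:ℝ) else 0)
          - pd f i y * pd f j y / (1 + ∑ k, (pd f k y)^2)) * pd (pd f j) i y :=
      Finset.sum_congr rfl fun i _ => Finset.sum_congr rfl fun j _ => by rw [gInv_apply]
    rw [← h2, heq y]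
    ring
  -- differentiability of the pieces
  have dG : ∀ (i j : Fin n) (y : Fin n → ℝ), DifferentiableAt ℝ (fun z => (if i = j then (1:ℝ) else 0)
      - pd f i z * pd f j z / (1 + ∑ k, (pd f k z)^2)) y := by
    intro i j y
    exact (differentiableAt_const _).sub
      (diffAt_div (((dP i) y).mul ((dP j) y)) (dV y) (hVne y))
  have dS : ∀ y, DifferentiableAt ℝ (fun z => ∑ i, ∑ j, ((if i = j then (1:ℝ) else 0)
      - pd f i z * pd f j z / (1 + ∑ k, (pd f k z)^2)) * pd (pd f j) i z) y := by
    intro y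
    exact DifferentiableAt.fun_sum fun i _ => DifferentiableAt.fun_sum fun j _ =>
      (dG i j y).mul ((dH i j) y)
  have dR : ∀ y, DifferentiableAt ℝ (fun z => -f z + (∑ i, z i * pd f i z)
      + lam * Real.sqrt (1 + ∑ k, (pd f k z)^2)) y := by
    intro y
    refine DifferentiableAt.add (DifferentiableAt.add ?_ ?_) ?_
    · exact ((hf.differentiable (by simp)) y).neg
    · exact DifferentiableAt.fun_sum fun i _ =>
        ((ContinuousLinearMap.proj i : (Fin n → ℝ) →L[ℝ] ℝ).differentiable y).mul ((dP i) y)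
    · exact ((dV y).sqrt (hVne y)).const_mul lam
  -- derivative of the metric coefficient
  have pdG : ∀ i j m : Fin n, pd (fun z => (if i = j then (1:ℝ) else 0)
      - pd f i z * pd f j z / (1 + ∑ k, (pd f k z)^2)) m x
      = 0 - ((pd (pd f i) m x * pd f j x + pd f i x * pd (pd f j) m x) * (1 + ∑ k, (pd f k x)^2)
          - pd f i x * pd f j x * (2 * (∑ k, pd f k x * pd (pd f k) m x)))
          / (1 + ∑ k, (pd f k x)^2)^2 := by
    intro i j m
    rw [pd_sub (a := fun _ => (if i = j then (1:ℝ) else 0))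
        (b := fun z => pd f i z * pd f j z / (1 + ∑ k, (pd f k z)^2))
        (differentiableAt_const _)
        (diffAt_div (((dP i) x).mul ((dP j) x)) (dV x) (hVne x)) m,
      pd_const,
      pd_div (a := fun z => pd f i z * pd f j z) (b := fun z => 1 + ∑ k, (pd f k z)^2)
        (((dP i) x).mul ((dP j) x)) (dV x) (hVne x) m,
      pd_mul ((dP i) x) ((dP j) x) m, pdV m x]
  have pdS : ∀ m : Fin n, pd (fun z => ∑ i, ∑ j, ((if i = j then (1:ℝ) else 0)
      - pd f i z * pd f j z / (1 + ∑ k, (pd f k z)^2)) * pd (pd f j) i z) m x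
      = ∑ i, ∑ j,
        ((0 - ((pd (pd f i) m x * pd f j x + pd f i x * pd (pd f j) m x) * (1 + ∑ k, (pd f k x)^2)
          - pd f i x * pd f j x * (2 * (∑ k, pd f k x * pd (pd f k) m x)))
          / (1 + ∑ k, (pd f k x)^2)^2) * pd (pd f j) i x
        + ((if i = j then (1:ℝ) else 0)
            - pd f i x * pd f j x / (1 + ∑ k, (pd f k x)^2)) * pd (pd (pd f j) i) m x) := by
    intro m
    rw [pd_sum Finset.univ (fun i => fun z => ∑ j, ((if i = j then (1:ℝ) else 0)
      - pd f i z * pd f j z / (1 + ∑ k, (pd f k z)^2)) * pd (pd f j) i z)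
      (fun i _ => DifferentiableAt.fun_sum fun j _ => (dG i j x).mul ((dH i j) x)) m]
    refine Finset.sum_congr rfl fun i _ => ?_
    rw [pd_sum Finset.univ (fun j => fun z => ((if i = j then (1:ℝ) else 0)
      - pd f i z * pd f j z / (1 + ∑ k, (pd f k z)^2)) * pd (pd f j) i z)
      (fun j _ => (dG i j x).mul ((dH i j) x)) m]
    refine Finset.sum_congr rfl fun j _ => ?_
    rw [pd_mul (dG i j x) ((dH i j) x) m, pdG i j m]
  have pdR : ∀ m : Fin n, pd (fun z => -f z + (∑ i, z i * pd f i z)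
      + lam * Real.sqrt (1 + ∑ k, (pd f k z)^2)) m x
      = -pd f m x + (∑ i, ((if m = i then (1:ℝ) else 0) * pd f i x + x i * pd (pd f i) m x))
        + lam * (2 * (∑ k, pd f k x * pd (pd f k) m x)
            / (2 * Real.sqrt (1 + ∑ k, (pd f k x)^2))) := by
    intro m
    rw [pd_add (a := fun z => -f z + (∑ i, z i * pd f i z))
        (b := fun z => lam * Real.sqrt (1 + ∑ k, (pd f k z)^2))
        (((hf.differentiable (by simp)) x).neg.add (DifferentiableAt.fun_sum fun i _ =>
          ((ContinuousLinearMap.proj i : (Fin n → ℝ) →L[ℝ] ℝ).differentiable x).mul ((dP i) x)))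
        (((dV x).sqrt (hVne x)).const_mul lam) m,
      pd_add (a := fun z => -f z) (b := fun z => ∑ i, z i * pd f i z)
        ((hf.differentiable (by simp)) x).neg
        (DifferentiableAt.fun_sum fun i _ =>
          ((ContinuousLinearMap.proj i : (Fin n → ℝ) →L[ℝ] ℝ).differentiable x).mul ((dP i) x)) m,
      pd_neg ((hf.differentiable (by simp)) x) m,
      pd_sum Finset.univ (fun i => fun z => z i * pd f i z)
        (fun i _ => ((ContinuousLinearMap.proj i : (Fin n → ℝ) →L[ℝ] ℝ).differentiable x).mul
          ((dP i) x)) m,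
      pd_const_mul (a := fun z => Real.sqrt (1 + ∑ k, (pd f k z)^2))
        ((dV x).sqrt (hVne x)) lam m,
      pd_sqrt (dV x) (hVne x) m, pdV m x]
    congr 1
    · congr 1
      refine Finset.sum_congr rfl fun i _ => ?_
      rw [pd_mul (a := fun z => z i) (b := pd f i)
        ((ContinuousLinearMap.proj i : (Fin n → ℝ) →L[ℝ] ℝ).differentiable x) ((dP i) x) m,
        pd_coord i m x]
  -- the differentiated equation
  have Em : ∀ m : Fin n, ∑ i, ∑ j,
      (((if i = j then (1:ℝ) else 0) - pd f i x * pd f j x / (1 + ∑ i, (pd f i x)^2))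
          * pd (pd (pd f j) i) m x
        - ((pd (pd f i) m x * pd f j x + pd f i x * pd (pd f j) m x) * (1 + ∑ i, (pd f i x)^2)
            - pd f i x * pd f j x * (2 * (∑ k, pd f k x * pd (pd f k) m x)))
            / (1 + ∑ i, (pd f i x)^2)^2 * pd (pd f j) i x)
      = ∑ i, x i * pd (pd f i) m x
        + lam * (2 * (∑ k, pd f k x * pd (pd f k) m x))
            / (2 * Real.sqrt (1 + ∑ i, (pd f i x)^2)) := by
    intro m
    have h0 : pd (fun y => (∑ i, ∑ j, ((if i = j then (1:ℝ) else 0)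
        - pd f i y * pd f j y / (1 + ∑ k, (pd f k y)^2)) * pd (pd f j) i y)
        - (-f y + (∑ i, y i * pd f i y) + lam * Real.sqrt (1 + ∑ k, (pd f k y)^2))) m x = 0 := by
      rw [pd_congr hΦ m x]; exact pd_const 0 m x
    rw [pd_sub (dS x) (dR x) m, pdS m, pdR m] at h0
    have hsum : ∑ i, (if m = i then (1:ℝ) else 0) * pd f i x = pd f m x := by
      rw [show ∀ (F : Fin n → ℝ), ∑ i, (if m = i then (1:ℝ) else 0) * F i
          = ∑ i, (if m = i then F i else 0) from fun F => Finset.sum_congr rfl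
            fun i _ => by by_cases h : m = i <;> simp [h]]
      simp
    have lhs_eq : ∑ i, ∑ j,
        (((if i = j then (1:ℝ) else 0) - pd f i x * pd f j x / (1 + ∑ i, (pd f i x)^2))
            * pd (pd (pd f j) i) m x
          - ((pd (pd f i) m x * pd f j x + pd f i x * pd (pd f j) m x) * (1 + ∑ i, (pd f i x)^2)
              - pd f i x * pd f j x * (2 * (∑ k, pd f k x * pd (pd f k) m x)))
              / (1 + ∑ i, (pd f i x)^2)^2 * pd (pd f j) i x)
        = ∑ i, ∑ j,
        ((0 - ((pd (pd f i) m x * pd f j x + pd f i x * pd (pd f j) m x) * (1 + ∑ k, (pd f k x)^2)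
          - pd f i x * pd f j x * (2 * (∑ k, pd f k x * pd (pd f k) m x)))
          / (1 + ∑ k, (pd f k x)^2)^2) * pd (pd f j) i x
        + ((if i = j then (1:ℝ) else 0)
            - pd f i x * pd f j x / (1 + ∑ k, (pd f k x)^2)) * pd (pd (pd f j) i) m x) :=
      Finset.sum_congr rfl fun i _ => Finset.sum_congr rfl fun j _ => by ring
    rw [lhs_eq]
    have h1 : ∑ i, ∑ j,
        ((0 - ((pd (pd f i) m x * pd f j x + pd f i x * pd (pd f j) m x) * (1 + ∑ k, (pd f k x)^2)
          - pd f i x * pd f j x * (2 * (∑ k, pd f k x * pd (pd f k) m x)))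
          / (1 + ∑ k, (pd f k x)^2)^2) * pd (pd f j) i x
        + ((if i = j then (1:ℝ) else 0)
            - pd f i x * pd f j x / (1 + ∑ k, (pd f k x)^2)) * pd (pd (pd f j) i) m x)
        = -pd f m x + (∑ i, ((if m = i then (1:ℝ) else 0) * pd f i x + x i * pd (pd f i) m x))
          + lam * (2 * (∑ k, pd f k x * pd (pd f k) m x)
              / (2 * Real.sqrt (1 + ∑ k, (pd f k x)^2))) := by linarith [h0]
    rw [h1, Finset.sum_add_distrib, hsum]
    ring
  have main := main_algebra lam x (fun i => pd f i x)
      (fun i => ∑ k, pd f k x * pd (pd f k) i x)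
      (fun i j => pd (pd f j) i x)
      (fun a b c => pd (pd (pd f c) b) a x)
      (1 + ∑ i, (pd f i x)^2)
      hsym' tsym' (fun i => rfl) rfl Em
  have hG2 : ∀ i j : Fin n, gInv f x i j = (if i = j then (1:ℝ) else 0)
      - pd f i x * pd f j x / (1 + ∑ k, (pd f k x)^2) := gInv_apply f x
  have hG3 : ∀ i j : Fin n, (gMat f x)⁻¹ i j = (if i = j then (1:ℝ) else 0)
      - pd f i x * pd f j x / (1 + ∑ k, (pd f k x)^2) := hG2
  show (1/2) * (∑ i, ∑ j, gInv f x i j * pd ψ i x * pd ψ j x)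
      ≤ (∑ i, ∑ j, (gMat f x)⁻¹ i j * pd (pd ψ j) i x)
        - (∑ i, x i * pd ψ i x)
        - lam * (∑ i, pd f i x * pd ψ i x) / Real.sqrt (1 + ∑ i, (pd f i x) ^ 2)
  simp only [hG2, hG3, hψdd, hψd]
  exact main
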